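/- If f : Γ → Λ is an active combinatorial graph map between connected graphs, then b₁(Γ) = b₁(Λ) + Σ_{w ∈ V_Λ} b₁(f⁻¹(w)), where b₁ of a connected graph is its number of edges minus its number of vertices plus one, and b₁ of a fiber is computed with one summand per connected component (with b₁ of the empty graph equal to 0). -/

import Mathlib

/-- A graph: finite sets `V` of vertices and `A` of arcs (half-edges), a fixed-point
free involution `† = dag` on arcs, and an endpoint map `t : A → V ⊔ {∞}`
(we encode `V ⊔ {∞}` as `Option V` with `∞ = none`). -/
structure CGraph : Type 1 where
  V : Type
  A : Type
  [fintypeV : Fintype V]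
  [fintypeA : Fintype A]
  dag : A → A
  dag_dag : ∀ a, dag (dag a) = a
  dag_ne : ∀ a, dag a ≠ a
  t : A → Option V

attribute [instance] CGraph.fintypeV CGraph.fintypeA

namespace CGraph

/-- The generating relation on `V ⊔ A`: an arc touches its `†`-partner, and an arc
touches its endpoint (when the endpoint is a vertex). -/
inductive Touch (G : CGraph) : (G.V ⊕ G.A) → (G.V ⊕ G.A) → Prop
  | dag (a : G.A) : Touch G (Sum.inr a) (Sum.inr (G.dag a))
  | incid (a : G.A) (v : G.V) : G.t a = some v → Touch G (Sum.inr a) (Sum.inl v)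

/-- A graph is connected if `V ⊔ A` is nonempty and the equivalence relation generated
by `Touch` has exactly one equivalence class. -/
def Connected (G : CGraph) : Prop :=
  Nonempty (G.V ⊕ G.A) ∧ ∀ x y : G.V ⊕ G.A, Relation.EqvGen G.Touch x y

/-- The valence of a vertex: the number of arcs ending at it. -/
noncomputable def valence (G : CGraph) (v : G.V) : ℕ :=
  Nat.card {a : G.A // G.t a = some v}

/-- A vertex is bivalent if exactly two arcs end at it. -/
def Bivalent (G : CGraph) (v : G.V) : Prop := G.valence v = 2

/-- `x ∈ V ⊔ {∞}` is bivalent or `∞`. -/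
def BivAt (G : CGraph) (x : Option G.V) : Prop :=
  x = none ∨ ∃ v, x = some v ∧ G.Bivalent v

/-- `IsPath G l s e`: the list of arcs `l = [a₁, …, aₙ]` is a path from `s` to `e`:
`t(a₁†) = s`, `t(aᵢ) = t(aᵢ₊₁†)` for `i < n`, and `t(aₙ) = e`; the empty path is a
path from `s` to `e` exactly when `s = e`. -/
def IsPath (G : CGraph) : List G.A → Option G.V → Option G.V → Prop
  | [], s, e => s = e
  | a :: l, s, e => G.t (G.dag a) = s ∧ G.IsPath l (G.t a) e

/-- A path is bivalent if each of its intermediate vertices `t(aᵢ)`, `i < n`, is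
bivalent or `∞`. -/
def IsBivalentPath (G : CGraph) (l : List G.A) (s e : Option G.V) : Prop :=
  G.IsPath l s e ∧
    ∀ (i : ℕ) (h : i + 1 < l.length), G.BivAt (G.t (l.get ⟨i, Nat.lt_of_succ_lt h⟩))

/-- The underlying data of a combinatorial graph map `Γ → Λ`: a basepoint-preserving
map on vertices-with-∞ and a map on arcs in the opposite direction. -/
structure PreMap (G H : CGraph) : Type where
  fv : Option G.V → Option H.V
  fa : H.A → G.A

/-- `FiberList f a l`: the list `l` enumerates `f_a⁻¹(a)` (without repetitions) and is
a bivalent path in the target graph between the images of the endpoints of `a`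
(oriented so that the identity map is a graph map). -/
def FiberList {G H : CGraph} (f : PreMap G H) (a : G.A) (l : List H.A) : Prop :=
  (∀ b : H.A, b ∈ l ↔ f.fa b = a) ∧ l.Nodup ∧
    H.IsBivalentPath l (f.fv (G.t (G.dag a))) (f.fv (G.t a))

/-- `MidVertexOf H l w`: `w` occurs as an intermediate vertex of the path `l`. -/
def MidVertexOf (H : CGraph) (l : List H.A) (w : H.V) : Prop :=
  ∃ (i : ℕ) (h : i + 1 < l.length), H.t (l.get ⟨i, Nat.lt_of_succ_lt h⟩) = some w

/-- `OnFiberPath f w a`: the vertex `w` of the target occurs as an intermediate vertex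
of the bivalent path enumerating `f_a⁻¹(a)`. -/
def OnFiberPath {G H : CGraph} (f : PreMap G H) (w : H.V) (a : G.A) : Prop :=
  ∃ l : List H.A, FiberList f a l ∧ MidVertexOf H l w

/-- The conditions for a pair `(f_v, f_a)` to be a combinatorial graph map:
(1) `f_v(∞) = ∞`; (2) `f_a` commutes with `†`; (3) each `f_a⁻¹(a)` admits an ordering
making it a bivalent path between the images of the endpoints of `a`; (4) vertices
identified by `f_v` are joined by a path of arcs outside the image of `f_a`;
(5) each vertex of the target not in the image of `f_v` is bivalent and occurs as an
intermediate vertex of exactly one of the bivalent paths from (3) (where the paths of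
an arc and of its `†`-partner are regarded as the same path). -/
def IsGraphMap {G H : CGraph} (f : PreMap G H) : Prop :=
  f.fv none = none ∧
  (∀ b : H.A, f.fa (H.dag b) = G.dag (f.fa b)) ∧
  (∀ a : G.A, ∃ l : List H.A, FiberList f a l) ∧
  (∀ v v' : G.V, f.fv (some v) = f.fv (some v') → f.fv (some v) ≠ none →
    ∃ l : List G.A, (∀ c ∈ l, c ∉ Set.range f.fa) ∧ G.IsPath l (some v) (some v')) ∧
  (∀ w : H.V, (∀ v : G.V, f.fv (some v) ≠ some w) →
    H.Bivalent w ∧ ∃ a : G.A, OnFiberPath f w a ∧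
      ∀ a' : G.A, OnFiberPath f w a' → a' = a ∨ a' = G.dag a)

/-- The identity pre-map. -/
def PreMap.id (G : CGraph) : PreMap G G := ⟨fun x => x, fun a => a⟩

/-- Composition of pre-maps: `f` first, then `g`. -/
def PreMap.comp {G H K : CGraph} (f : PreMap G H) (g : PreMap H K) : PreMap G K :=
  ⟨g.fv ∘ f.fv, f.fa ∘ g.fa⟩

/-- A combinatorial graph map is inert if `f_v⁻¹(w)` has exactly one element for every
vertex `w` of the target, and `f_a⁻¹(a)` is empty only when `f_v(t(a)) = ∞`. -/
def IsInert {G H : CGraph} (f : PreMap G H) : Prop :=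
  (∀ w : H.V, ∃! v : G.V, f.fv (some v) = some w) ∧
  (∀ a : G.A, (∀ b : H.A, f.fa b ≠ a) → f.fv (G.t a) = none)

/-- A combinatorial graph map is active if `f_v⁻¹(∞) = {∞}` and none of the bivalent
paths `f_a⁻¹(a)` passes through `∞`. -/
def IsActive {G H : CGraph} (f : PreMap G H) : Prop :=
  (∀ x : Option G.V, f.fv x = none → x = none) ∧
  (∀ (a : G.A) (l : List H.A), FiberList f a l →
    ∀ (i : ℕ) (h : i + 1 < l.length), H.t (l.get ⟨i, Nat.lt_of_succ_lt h⟩) ≠ none)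

/-- An isomorphism of graphs: a graph map with a two-sided inverse graph map. -/
def IsGraphIso {G H : CGraph} (f : PreMap G H) : Prop :=
  IsGraphMap f ∧ ∃ g : PreMap H G, IsGraphMap g ∧
    f.comp g = PreMap.id G ∧ g.comp f = PreMap.id H

end CGraph

namespace CGraph

/-- The condition for an arc of `Γ` to belong to the fiber of a pre-map `f : Γ → Λ`
over a vertex `w` of `Λ`: the arc (and its `†`-partner) is not in the image of `f_a`,
and both of its endpoints are vertices lying in `f_v⁻¹(w)`. -/
def FiberArc {G H : CGraph} (f : PreMap G H) (w : H.V) (a : G.A) : Prop :=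
  a ∉ Set.range f.fa ∧ G.dag a ∉ Set.range f.fa ∧
    (∃ v, G.t a = some v ∧ f.fv (some v) = some w) ∧
    (∃ v, G.t (G.dag a) = some v ∧ f.fv (some v) = some w)

/-- The fiber `f⁻¹(w)` of a pre-map `f : Γ → Λ` over a vertex `w` of `Λ`: the subgraph
of `Γ` with vertex set `f_v⁻¹(w)` and arc set the arcs outside the image of `f_a` with
both endpoints in `f_v⁻¹(w)`. -/
noncomputable def fiber {G H : CGraph} (f : PreMap G H) (w : H.V) : CGraph where
  V := {v : G.V // f.fv (some v) = some w}
  A := {a : G.A // FiberArc f w a}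
  fintypeV := Fintype.ofFinite _
  fintypeA := Fintype.ofFinite _
  dag a := ⟨G.dag a.1, a.2.2.1, by rw [G.dag_dag]; exact a.2.1, a.2.2.2.2, by
    rw [G.dag_dag]; exact a.2.2.2.1⟩
  dag_dag a := Subtype.ext (G.dag_dag a.1)
  dag_ne a h := G.dag_ne a.1 (congrArg Subtype.val h)
  t a := some ⟨a.2.2.2.1.choose, a.2.2.2.1.choose_spec.2⟩

end CGraph

namespace CGraph

/-- The first Betti number of a finite graph:
`#edges − #vertices + #components` (one summand per connected component; `0` for the
empty graph).  Edges are pairs `{a, a†}` of arcs, and connected components are the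
equivalence classes of `V ⊔ A` under the equivalence relation generated by `Touch`. -/
noncomputable def b1 (G : CGraph) : ℕ :=
  Fintype.card G.A / 2 + Nat.card (Quot G.Touch) - Fintype.card G.V

end CGraph

/-!
All counts are doubled to avoid halves. For a connected graph `2 b₁ = #A - 2 #V + 2`; the
subtraction in `b1` does not truncate because a spanning tree of the incidence graph on `V ⊔ A`
gives `2 #V ≤ #A + 2`. Activeness makes the fibers partition the vertices of `Γ`, and they also
partition the arcs of `Γ` collapsed by `f`. In `Λ`, the arcs ending at a vertex outside the image
of `f_v` are exactly those that are not the last arc of their path `f_a⁻¹(a)`; such vertices are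
bivalent, so `#A_Λ = 2 #(V_Λ \ im f_v) + #(im f_a)`. A fiber over a vertex of `im f_v` is
connected and the other fibers are empty, and adding up gives the formula.
-/

open Finset

lemma Finset.card_eq_sum_card_filter_eq_some {α β : Type*} [Fintype β] [DecidableEq β]
    (s : Finset α) (g : α → Option β) (hg : ∀ a ∈ s, g a ≠ none) :
    #s = ∑ b, #{a ∈ s | g a = some b} := by
  rw [card_eq_sum_card_fiberwise (f := g) (t := univ) fun _ _ => mem_univ _,
    Fintype.sum_option, filter_false_of_mem hg, card_empty, zero_add]

namespace CGraph

section Graph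

variable {G : CGraph}

lemma dag_involutive (G : CGraph) : Function.Involutive G.dag := G.dag_dag

lemma dag_injective (G : CGraph) : Function.Injective G.dag := G.dag_involutive.injective

lemma two_dvd_card_A (G : CGraph) : 2 ∣ Fintype.card G.A := by
  classical
  have hsq : G.dag_involutive.toPerm ^ 2 = 1 := by
    ext a
    simp [sq, G.dag_dag]
  have hsupp : G.dag_involutive.toPerm.support = univ := by
    ext a
    simp [G.dag_ne]
  simpa [hsupp] using Equiv.Perm.two_dvd_card_support hsq

lemma Touch.ne {x y : G.V ⊕ G.A} (h : G.Touch x y) : x ≠ y := by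
  cases h with
  | dag a => exact fun h => G.dag_ne a (Sum.inr_injective h).symm
  | incid a v _ => exact Sum.inr_ne_inl

lemma Connected.iff_of_touch (hG : G.Connected) {P : G.V ⊕ G.A → Prop}
    (hP : ∀ x y, G.Touch x y → (P x ↔ P y)) (x y : G.V ⊕ G.A) : P x ↔ P y := by
  induction hG.2 x y with
  | rel x y h => exact hP x y h
  | refl => exact Iff.rfl
  | symm _ _ _ ih => exact ih.symm
  | trans _ _ _ _ _ ih₁ ih₂ => exact ih₁.trans ih₂

lemma Connected.card_quot_touch (hG : G.Connected) : Nat.card (Quot G.Touch) = 1 := by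
  obtain ⟨⟨x⟩, hrel⟩ := hG
  refine Nat.card_eq_one_iff_unique.mpr ⟨⟨fun p q => ?_⟩, ⟨Quot.mk _ x⟩⟩
  induction p using Quot.ind
  induction q using Quot.ind
  exact Quot.eqvGen_sound (hrel _ _)

def touchGraph (G : CGraph) : SimpleGraph (G.V ⊕ G.A) := SimpleGraph.fromRel G.Touch

lemma Connected.connected_touchGraph (hG : G.Connected) : G.touchGraph.Connected := by
  have := hG.1
  refine ⟨fun x y => ?_⟩
  induction hG.2 x y with
  | rel x y h => exact SimpleGraph.Adj.reachable ⟨h.ne, Or.inl h⟩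
  | refl => rfl
  | symm _ _ _ ih => exact ih.symm
  | trans _ _ _ _ _ ih₁ ih₂ => exact ih₁.trans ih₂

lemma two_mul_card_edgeSet_touchGraph_le (G : CGraph) :
    2 * Nat.card G.touchGraph.edgeSet ≤ 3 * Fintype.card G.A := by
  classical
  let dagEdge : G.A → Sym2 (G.V ⊕ G.A) := fun a => s(.inr a, .inr (G.dag a))
  let incidEdge : G.A → Sym2 (G.V ⊕ G.A) :=
    fun a => s(.inr a, (G.t a).elim (.inr (G.dag a)) .inl)
  have hsub : G.touchGraph.edgeFinset ⊆ univ.image dagEdge ∪ univ.image incidEdge := by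
    intro e he
    induction e using Sym2.ind with | _ x y =>
    rw [SimpleGraph.mem_edgeFinset, SimpleGraph.mem_edgeSet] at he
    rcases he.2 with h | h <;> cases h with
    | dag a =>
      exact mem_union_left _ (mem_image.mpr ⟨a, mem_univ _, by simp [dagEdge, Sym2.eq_swap]⟩)
    | incid a v hv =>
      exact mem_union_right _
        (mem_image.mpr ⟨a, mem_univ _, by simp [incidEdge, hv, Sym2.eq_swap]⟩)
  have hdag : 2 * #(univ.image dagEdge) ≤ Fintype.card G.A := by
    refine Finset.mul_card_image_le_card univ 2 fun e he => ?_
    obtain ⟨a, -, rfl⟩ := Finset.mem_image.mp he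
    calc 2 = #{a, G.dag a} := (Finset.card_pair (G.dag_ne a).symm).symm
      _ ≤ _ := Finset.card_le_card fun b hb => by
        rcases mem_insert.mp hb with rfl | hb
        · simp
        · simp [dagEdge, mem_singleton.mp hb, G.dag_dag]
  have hincid : #(univ.image incidEdge) ≤ Fintype.card G.A := Finset.card_image_le
  have := Finset.card_le_card hsub
  have := Finset.card_union_le (univ.image dagEdge) (univ.image incidEdge)
  rw [Nat.card_eq_fintype_card, ← SimpleGraph.edgeFinset_card]
  omega

lemma Connected.two_mul_card_V_le (hG : G.Connected) :
    2 * Fintype.card G.V ≤ Fintype.card G.A + 2 := by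
  have hV := hG.connected_touchGraph.card_vert_le_card_edgeSet_add_one
  have hE := G.two_mul_card_edgeSet_touchGraph_le
  rw [Nat.card_eq_fintype_card, Fintype.card_sum] at hV
  omega

lemma Connected.two_mul_b1_add_card_V (hG : G.Connected) :
    2 * b1 G + 2 * Fintype.card G.V = Fintype.card G.A + 2 := by
  have hV := hG.two_mul_card_V_le
  have hA := G.two_dvd_card_A
  rw [b1, hG.card_quot_touch]
  omega

lemma b1_of_isEmpty [IsEmpty G.V] [IsEmpty G.A] : b1 G = 0 := by
  have : IsEmpty (Quot G.Touch) := ⟨fun q => isEmptyElim q.exists_rep.choose⟩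
  simp [b1]

lemma IsPath.t_dag_getElem_zero {l : List G.A} {s e : Option G.V} (hp : G.IsPath l s e)
    (h : 0 < l.length) : G.t (G.dag l[0]) = s := by
  match l, hp with
  | _ :: _, hp => exact hp.1

lemma IsPath.t_dag_getElem_succ {l : List G.A} {s e : Option G.V} (hp : G.IsPath l s e)
    {i : ℕ} (h : i + 1 < l.length) : G.t (G.dag l[i + 1]) = G.t l[i] := by
  induction l generalizing s i with
  | nil => simp at h
  | cons a l ih =>
    match i, l, hp with
    | 0, _ :: _, hp => exact hp.2.1
    | j + 1, l, hp => exact ih hp.2 (by simpa using h)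

lemma IsPath.t_getLast {l : List G.A} {s e : Option G.V} (hp : G.IsPath l s e)
    (h : l ≠ []) : G.t (l.getLast h) = e := by
  induction l generalizing s with
  | nil => exact absurd rfl h
  | cons a l ih =>
    match l, hp with
    | [], hp => exact hp.2
    | b :: l, hp => exact ih hp.2 (List.cons_ne_nil b l)

lemma Bivalent.eq_or_eq {w : G.V} (hw : G.Bivalent w) {x y z : G.A}
    (hx : G.t x = some w) (hy : G.t y = some w) (hxy : x ≠ y) (hz : G.t z = some w) :
    z = x ∨ z = y := by
  classical
  have hcard : #{a | G.t a = some w} = 2 := by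
    rw [← Fintype.card_subtype, ← Nat.card_eq_fintype_card]
    exact hw
  have hpair : ({x, y} : Finset G.A) = ({a | G.t a = some w} : Finset G.A) := by
    refine eq_of_subset_of_card_le (fun a ha => ?_) (hcard.trans (card_pair hxy).symm).le
    rcases mem_insert.mp ha with rfl | ha
    · simpa using hx
    · rw [mem_singleton.mp ha]
      simpa using hy
  have hz' : z ∈ ({x, y} : Finset G.A) := hpair ▸ by simpa using hz
  simpa using hz'

end Graph

def PreMap.vertexImage {G H : CGraph} (f : PreMap G H) : Set H.V :=
  {w | ∃ v, f.fv (some v) = some w}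

section Map

variable {G H : CGraph} {f : PreMap G H}

namespace IsGraphMap

variable (hf : IsGraphMap f)
include hf

lemma fa_dag (b : H.A) : f.fa (H.dag b) = G.dag (f.fa b) := hf.2.1 b

lemma dag_mem_range {a : G.A} : G.dag a ∈ Set.range f.fa ↔ a ∈ Set.range f.fa := by
  constructor
  · rintro ⟨b, hb⟩
    exact ⟨H.dag b, by rw [hf.fa_dag, hb, G.dag_dag]⟩
  · rintro ⟨b, rfl⟩
    exact ⟨H.dag b, hf.fa_dag b⟩

lemma fv_t_dag_eq {a : G.A} (ha : a ∉ Set.range f.fa) :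
    f.fv (G.t (G.dag a)) = f.fv (G.t a) := by
  obtain ⟨l, hl⟩ := hf.2.2.1 a
  cases l with
  | nil => exact hl.2.2.1
  | cons b _ => exact absurd ⟨b, (hl.1 b).mp List.mem_cons_self⟩ ha

lemma exists_eq_some_of_fv_eq_some {x : Option G.V} {w : H.V} (h : f.fv x = some w) :
    ∃ v, x = some v ∧ f.fv (some v) = some w := by
  cases x with
  | none => rw [hf.1] at h; cases h
  | some v => exact ⟨v, rfl, h⟩

lemma fv_ne_some_of_not_mem_vertexImage {w : H.V} (hw : w ∉ f.vertexImage)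
    (x : Option G.V) : f.fv x ≠ some w := fun h => by
  obtain ⟨v, -, hv⟩ := hf.exists_eq_some_of_fv_eq_some h
  exact hw ⟨v, hv⟩

end IsGraphMap

lemma fiberArc_iff (hf : IsGraphMap f) {w : H.V} {a : G.A} :
    FiberArc f w a ↔ a ∉ Set.range f.fa ∧ f.fv (G.t a) = some w := by
  refine ⟨fun ⟨ha, _, ⟨v, hv, hfv⟩, _⟩ => ⟨ha, by rw [hv, hfv]⟩, fun ⟨ha, hw⟩ => ?_⟩
  refine ⟨ha, hf.dag_mem_range.not.mpr ha, ?_, ?_⟩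
  · obtain ⟨v, hv, hfv⟩ := hf.exists_eq_some_of_fv_eq_some hw
    exact ⟨v, hv, hfv⟩
  · obtain ⟨v, hv, hfv⟩ := hf.exists_eq_some_of_fv_eq_some ((hf.fv_t_dag_eq ha).trans hw)
    exact ⟨v, hv, hfv⟩

namespace FiberList

variable {a : G.A} {l : List H.A} (hl : FiberList f a l)
include hl

lemma fa_eq {b : H.A} (hb : b ∈ l) : f.fa b = a := (hl.1 b).mp hb

lemma fa_getElem {i : ℕ} (h : i < l.length) : f.fa l[i] = a := hl.fa_eq (List.getElem_mem h)

lemma isPath : H.IsPath l (f.fv (G.t (G.dag a))) (f.fv (G.t a)) := hl.2.2.1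

lemma ne_nil_of_mem_range (ha : a ∈ Set.range f.fa) : l ≠ [] := by
  obtain ⟨b, hb⟩ := ha
  exact List.ne_nil_of_mem ((hl.1 b).mpr hb)

section Mid

variable {i : ℕ} (hi : i + 1 < l.length) {w : H.V} (hw : H.t l[i] = some w)
include hi hw

lemma bivalent_of_t_eq : H.Bivalent w := by
  have h := hl.2.2.2 i hi
  simp only [List.get_eq_getElem, hw] at h
  rcases h with h | ⟨v, hv, hb⟩
  · cases h
  · cases hv
    exact hb

lemma eq_or_eq_of_t_eq (hf : IsGraphMap f) {b : H.A} (hb : H.t b = some w) :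
    b = l[i] ∨ b = H.dag l[i + 1] := by
  refine (hl.bivalent_of_t_eq hi hw).eq_or_eq hw ?_ ?_ hb
  · rw [hl.isPath.t_dag_getElem_succ hi, hw]
  · intro h
    have h' := congrArg f.fa h
    rw [hf.fa_dag, hl.fa_getElem, hl.fa_getElem] at h'
    exact G.dag_ne a h'.symm

lemma fv_t_ne (hf : IsGraphMap f) : f.fv (G.t a) ≠ some w := by
  intro ha
  have hne : l ≠ [] := List.ne_nil_of_length_pos (by omega)
  have hlast : H.t (l.getLast hne) = some w := by rw [hl.isPath.t_getLast hne, ha]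
  rw [List.getLast_eq_getElem] at hlast
  rcases hl.eq_or_eq_of_t_eq hi hw hf hlast with h | h
  · have := hl.2.1.getElem_inj_iff.mp h
    omega
  · have h' := congrArg f.fa h
    rw [hf.fa_dag, hl.fa_getElem, hl.fa_getElem] at h'
    exact G.dag_ne a h'.symm

lemma fv_t_dag_ne (hf : IsGraphMap f) : f.fv (G.t (G.dag a)) ≠ some w := by
  intro ha
  have hfirst : H.t (H.dag l[0]) = some w := by
    rw [hl.isPath.t_dag_getElem_zero (by omega), ha]
  rcases hl.eq_or_eq_of_t_eq hi hw hf hfirst with h | h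
  · have h' := congrArg f.fa h
    rw [hf.fa_dag, hl.fa_getElem, hl.fa_getElem] at h'
    exact G.dag_ne a h'
  · have := hl.2.1.getElem_inj_iff.mp (H.dag_injective h)
    omega

lemma not_mem_range_of_fv_t_eq (hf : IsGraphMap f) {c : G.A} (hc : f.fv (G.t c) = some w) :
    c ∉ Set.range f.fa := by
  rintro ⟨b, rfl⟩
  obtain ⟨lc, hlc⟩ := hf.2.2.1 (f.fa b)
  have hne := hlc.ne_nil_of_mem_range ⟨b, rfl⟩
  have hlast : H.t (lc.getLast hne) = some w := by rw [hlc.isPath.t_getLast hne, hc]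
  have hfa : f.fa (lc.getLast hne) = f.fa b := hlc.fa_eq (List.getLast_mem hne)
  rcases hl.eq_or_eq_of_t_eq hi hw hf hlast with h | h
  · rw [h, hl.fa_getElem] at hfa
    exact hl.fv_t_ne hi hw hf (hfa ▸ hc)
  · rw [h, hf.fa_dag, hl.fa_getElem] at hfa
    exact hl.fv_t_dag_ne hi hw hf (hfa ▸ hc)

/-- An arc of `Γ` ending over `w` is collapsed by `f`, since both arcs of `Λ` at `w` lie on the
path of `a`. So the vertices over `w` and the arcs ending over `w` form a union of components
of `Γ`, which by connectedness would contain `a`. -/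
lemma not_mem_vertexImage (hG : G.Connected) (hf : IsGraphMap f) : w ∉ f.vertexImage := by
  rintro ⟨v, hv⟩
  let P : G.V ⊕ G.A → Prop :=
    Sum.elim (fun v => f.fv (some v) = some w) (fun c => f.fv (G.t c) = some w)
  have hdag (c : G.A) (hc : P (.inr c)) : P (.inr (G.dag c)) := by
    change f.fv (G.t (G.dag c)) = some w
    rwa [hf.fv_t_dag_eq (hl.not_mem_range_of_fv_t_eq hi hw hf hc)]
  have hP : ∀ x y, G.Touch x y → (P x ↔ P y) := by
    intro x y h
    cases h with
    | dag c => exact ⟨hdag c, fun h => G.dag_dag c ▸ hdag _ h⟩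
    | incid c u hu => simp [P, hu]
  exact hl.fv_t_ne hi hw hf ((hG.iff_of_touch hP (.inl v) (.inr a)).mp hv)

end Mid

end FiberList

/-- Otherwise `Γ` is a single edge with both ends at `∞`, and `Λ` would have to be empty. -/
lemma IsGraphMap.fv_t_ne_none (hG : G.Connected) (hH : H.Connected) (hf : IsGraphMap f)
    (hact : IsActive f) {a : G.A} (ha : a ∉ Set.range f.fa) : f.fv (G.t a) ≠ none := by
  intro h
  have hta : G.t a = none := hact.1 _ h
  have htda : G.t (G.dag a) = none := hact.1 _ (by rw [hf.fv_t_dag_eq ha, h])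
  let Q : G.V ⊕ G.A → Prop := fun x => x = .inr a ∨ x = .inr (G.dag a)
  have hQ : ∀ x y, G.Touch x y → (Q x ↔ Q y) := by
    intro x y h
    cases h with
    | dag c => simp [Q, G.dag_involutive.eq_iff, G.dag_dag, or_comm]
    | incid c v hv =>
      simp only [Q, reduceCtorEq, or_false, Sum.inr.injEq, iff_false]
      rintro (rfl | rfl) <;> simp_all
  have hall (x : G.V ⊕ G.A) : Q x := (hG.iff_of_touch hQ (.inr a) x).mp (Or.inl rfl)
  have hA : IsEmpty H.A := ⟨fun b => by
    rcases hall (.inr (f.fa b)) with hb | hb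
    · exact ha ⟨b, Sum.inr_injective hb⟩
    · exact ha (hf.dag_mem_range.mp ⟨b, Sum.inr_injective hb⟩)⟩
  obtain ⟨w | b⟩ := hH.1
  · have hbiv := (hf.2.2.2.2 w fun v _ => by simpa [Q] using hall (.inl v)).1
    simp [Bivalent, valence] at hbiv
  · exact isEmptyElim b

lemma fiber_t {w : H.V} (c : (fiber f w).A) {v : G.V} (hv : G.t c.1 = some v)
    (hfv : f.fv (some v) = some w) : (fiber f w).t c = some ⟨v, hfv⟩ :=
  congrArg some (Subtype.ext (Option.some_injective _ (c.2.2.2.1.choose_spec.1.symm.trans hv)))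

lemma eqvGen_fiber_touch_of_isPath (hf : IsGraphMap f) {w : H.V} :
    ∀ (l : List G.A) {u u' : (fiber f w).V}, (∀ c ∈ l, c ∉ Set.range f.fa) →
      G.IsPath l (some u.1) (some u'.1) →
        Relation.EqvGen (fiber f w).Touch (.inl u) (.inl u')
  | [], u, u', _, hp => by
    obtain rfl : u = u' := Subtype.ext (Option.some_injective _ hp)
    exact .refl _
  | c :: l, u, u', hl, hp => by
    have hc : c ∉ Set.range f.fa := hl c List.mem_cons_self
    have hfc : f.fv (G.t c) = some w := by rw [← hf.fv_t_dag_eq hc, hp.1, u.2]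
    obtain ⟨v, hv, hfv⟩ := hf.exists_eq_some_of_fv_eq_some hfc
    let c' : (fiber f w).A := ⟨c, (fiberArc_iff hf).mpr ⟨hc, hfc⟩⟩
    have h₁ : (fiber f w).Touch (.inr ((fiber f w).dag c')) (.inl u) :=
      .incid _ _ (fiber_t _ hp.1 u.2)
    have h₂ : (fiber f w).Touch (.inr c') (.inr ((fiber f w).dag c')) := .dag c'
    have h₃ : (fiber f w).Touch (.inr c') (.inl ⟨v, hfv⟩) := .incid _ _ (fiber_t c' hv hfv)
    have ih := eqvGen_fiber_touch_of_isPath hf l (u := ⟨v, hfv⟩) (u' := u')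
      (fun c hc => hl c (List.mem_cons_of_mem _ hc)) (hv ▸ hp.2)
    exact .trans _ _ _ (.symm _ _ (.rel _ _ h₁))
      (.trans _ _ _ (.symm _ _ (.rel _ _ h₂)) (.trans _ _ _ (.rel _ _ h₃) ih))

lemma fiber_connected (hf : IsGraphMap f) {w : H.V} (hw : w ∈ f.vertexImage) :
    (fiber f w).Connected := by
  obtain ⟨v₀, hv₀⟩ := hw
  have hvert (u u' : (fiber f w).V) : Relation.EqvGen (fiber f w).Touch (.inl u) (.inl u') := by
    obtain ⟨l, hl, hp⟩ := hf.2.2.2.1 u.1 u'.1 (u.2.trans u'.2.symm)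
      (by rw [u.2]; exact Option.some_ne_none _)
    exact eqvGen_fiber_touch_of_isPath hf l hl hp
  have hnode (x : (fiber f w).V ⊕ (fiber f w).A) :
      ∃ u, Relation.EqvGen (fiber f w).Touch x (.inl u) := by
    rcases x with u | c
    · exact ⟨u, .refl _⟩
    · obtain ⟨v, hv, hfv⟩ := c.2.2.2.1
      exact ⟨⟨v, hfv⟩, .rel _ _ (.incid _ _ (fiber_t c hv hfv))⟩
  refine ⟨⟨.inl ⟨v₀, hv₀⟩⟩, fun x y => ?_⟩
  obtain ⟨u, hu⟩ := hnode x
  obtain ⟨u', hu'⟩ := hnode y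
  exact .trans _ _ _ hu (.trans _ _ _ (hvert u u') (.symm _ _ hu'))

open scoped Classical in
lemma two_mul_b1_fiber_add_card_V (hf : IsGraphMap f) (w : H.V) :
    2 * b1 (fiber f w) + 2 * Fintype.card (fiber f w).V =
      Fintype.card (fiber f w).A + 2 * if w ∈ f.vertexImage then 1 else 0 := by
  split_ifs with hw
  · exact (fiber_connected hf hw).two_mul_b1_add_card_V
  · have : IsEmpty (fiber f w).V := ⟨fun u => hw ⟨u.1, u.2⟩⟩
    have : IsEmpty (fiber f w).A := ⟨fun c => by
      obtain ⟨v, -, hv⟩ := c.2.2.2.1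
      exact hw ⟨v, hv⟩⟩
    simp [b1_of_isEmpty]

lemma two_mul_sum_b1_fiber_add (hf : IsGraphMap f) :
    2 * ∑ w, b1 (fiber f w) + 2 * ∑ w, Fintype.card (fiber f w).V =
      ∑ w, Fintype.card (fiber f w).A + 2 * f.vertexImage.ncard := by
  classical
  simp only [mul_sum, ← sum_add_distrib, two_mul_b1_fiber_add_card_V hf]
  rw [sum_add_distrib, ← mul_sum, sum_boole, Set.ncard_eq_toFinset_card',
    Set.filter_mem_univ_eq_toFinset, Nat.cast_id]

lemma card_fiber_V (w : H.V) [DecidableEq H.V] :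
    Fintype.card (fiber f w).V = #{v | f.fv (some v) = some w} := by
  rw [← Fintype.card_subtype]
  exact Fintype.card_congr (Equiv.refl _)

lemma card_fiber_A (hf : IsGraphMap f) (w : H.V) [DecidableEq H.V]
    [DecidablePred (· ∈ Set.range f.fa)] :
    Fintype.card (fiber f w).A =
      #{a ∈ ({a | a ∉ Set.range f.fa} : Finset G.A) | f.fv (G.t a) = some w} := by
  rw [filter_filter, ← Fintype.card_subtype]
  exact Fintype.card_congr (Equiv.subtypeEquivRight fun _ => fiberArc_iff hf)

lemma card_V_eq_sum_card_fiber_V (hact : IsActive f) :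
    Fintype.card G.V = ∑ w, Fintype.card (fiber f w).V := by
  classical
  rw [← card_univ, card_eq_sum_card_filter_eq_some univ (fun v => f.fv (some v))
    fun v _ h => Option.some_ne_none v (hact.1 _ h)]
  simp only [card_fiber_V]

lemma card_A_eq_sum_card_fiber_A_add (hG : G.Connected) (hH : H.Connected)
    (hf : IsGraphMap f) (hact : IsActive f) :
    Fintype.card G.A = ∑ w, Fintype.card (fiber f w).A + (Set.range f.fa).ncard := by
  classical
  rw [← card_univ, ← card_filter_add_card_filter_not (fun a => a ∉ Set.range f.fa),
    card_eq_sum_card_filter_eq_some _ (fun a => f.fv (G.t a))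
      fun a ha => hf.fv_t_ne_none hG hH hact (mem_filter.mp ha).2]
  simp only [card_fiber_A hf, not_not, Set.ncard_eq_toFinset_card',
    Set.filter_mem_univ_eq_toFinset]

lemma FiberList.exists_not_mem_vertexImage_t_getElem (hG : G.Connected)
    (hf : IsGraphMap f) (hact : IsActive f) {a : G.A} {l : List H.A} (hl : FiberList f a l)
    {i : ℕ} (hi : i + 1 < l.length) : ∃ w ∉ f.vertexImage, H.t l[i] = some w := by
  obtain ⟨w, hw⟩ := Option.ne_none_iff_exists'.mp (by simpa using hact.2 a l hl i hi)
  exact ⟨w, hl.not_mem_vertexImage hi hw hG hf, hw⟩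

lemma IsGraphMap.eq_of_fa_eq (hG : G.Connected) (hf : IsGraphMap f) (hact : IsActive f)
    {b b' : H.A} (h : f.fa b = f.fa b') (hb : ¬∃ w ∉ f.vertexImage, H.t b = some w)
    (hb' : ¬∃ w ∉ f.vertexImage, H.t b' = some w) : b = b' := by
  obtain ⟨l, hl⟩ := hf.2.2.1 (f.fa b)
  have hlast (c : H.A) (hc : f.fa c = f.fa b) (hc' : ¬∃ w ∉ f.vertexImage, H.t c = some w) :
      ∃ (i : ℕ) (h : i < l.length), i + 1 = l.length ∧ l[i] = c := by
    obtain ⟨i, hi, rfl⟩ := List.getElem_of_mem ((hl.1 c).mpr hc)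
    refine ⟨i, hi, ?_, rfl⟩
    by_contra hne
    exact hc' (hl.exists_not_mem_vertexImage_t_getElem hG hf hact (by omega))
  obtain ⟨i, hi, hil, rfl⟩ := hlast b rfl hb
  obtain ⟨j, hj, hjl, rfl⟩ := hlast b' h.symm hb'
  obtain rfl : i = j := by omega
  rfl

lemma IsGraphMap.exists_fa_eq (hf : IsGraphMap f) {a : G.A} (ha : a ∈ Set.range f.fa) :
    ∃ b, f.fa b = a ∧ ¬∃ w ∉ f.vertexImage, H.t b = some w := by
  obtain ⟨l, hl⟩ := hf.2.2.1 a
  have hne := hl.ne_nil_of_mem_range ha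
  refine ⟨l.getLast hne, hl.fa_eq (List.getLast_mem hne), ?_⟩
  rintro ⟨w, hw, h⟩
  rw [hl.isPath.t_getLast hne] at h
  exact hf.fv_ne_some_of_not_mem_vertexImage hw _ h

open scoped Classical in
lemma card_arcs_into_compl_vertexImage (hf : IsGraphMap f) :
    #{b : H.A | ∃ w ∉ f.vertexImage, H.t b = some w} = 2 * f.vertexImageᶜ.ncard := by
  rw [card_eq_sum_card_filter_eq_some _ H.t fun b hb => by
    obtain ⟨w, -, hw⟩ := (mem_filter.mp hb).2
    simp [hw]]
  have hfib (w : H.V) : #{b ∈ ({b | ∃ w ∉ f.vertexImage, H.t b = some w} : Finset H.A) |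
      H.t b = some w} = 2 * if w ∈ f.vertexImageᶜ then 1 else 0 := by
    split_ifs with hw
    · have hbiv : H.Bivalent w := (hf.2.2.2.2 w fun v hv => hw ⟨v, hv⟩).1
      rw [filter_filter, mul_one, ← (hbiv : H.valence w = 2), valence,
        Nat.card_eq_fintype_card, ← Fintype.card_subtype]
      exact Fintype.card_congr (Equiv.subtypeEquivRight fun b =>
        ⟨fun h => h.2, fun h => ⟨⟨w, hw, h⟩, h⟩⟩)
    · rw [mul_zero, card_eq_zero, filter_eq_empty_iff]
      intro b hb h
      obtain ⟨w', hw', h'⟩ := (mem_filter.mp hb).2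
      exact hw (Option.some_injective _ (h'.symm.trans h) ▸ hw')
  rw [sum_congr rfl fun w _ => hfib w, ← mul_sum, sum_boole, Set.ncard_eq_toFinset_card',
    Set.filter_mem_univ_eq_toFinset, Nat.cast_id]

open scoped Classical in
lemma card_arcs_not_into_compl_vertexImage (hG : G.Connected) (hf : IsGraphMap f)
    (hact : IsActive f) :
    #{b : H.A | ¬∃ w ∉ f.vertexImage, H.t b = some w} = (Set.range f.fa).ncard := by
  rw [Set.ncard_eq_toFinset_card', ← card_image_of_injOn fun b hb b' hb' h =>
    hf.eq_of_fa_eq hG hact h (mem_filter.mp hb).2 (mem_filter.mp hb').2]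
  congr 1
  ext a
  simp only [mem_image, mem_filter, mem_univ, true_and, Set.mem_toFinset]
  exact ⟨fun ⟨b, _, hb⟩ => ⟨b, hb⟩, fun ha => (hf.exists_fa_eq ha).imp fun _ hb => hb.symm⟩

lemma card_A_eq_two_mul_ncard_compl_add (hG : G.Connected) (hf : IsGraphMap f)
    (hact : IsActive f) :
    Fintype.card H.A = 2 * f.vertexImageᶜ.ncard + (Set.range f.fa).ncard := by
  classical
  rw [← card_univ,
    ← card_filter_add_card_filter_not fun b => ∃ w ∉ f.vertexImage, H.t b = some w,
    card_arcs_into_compl_vertexImage hf, card_arcs_not_into_compl_vertexImage hG hf hact]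

end Map

end CGraph

open CGraph in
theorem active_b1_additivity (G H : CGraph) (hG : G.Connected) (hH : H.Connected)
    (f : PreMap G H) (hf : IsGraphMap f) (hact : IsActive f) :
    b1 G = b1 H + ∑ w : H.V, b1 (fiber f w) := by
  have hbG := hG.two_mul_b1_add_card_V
  have hbH := hH.two_mul_b1_add_card_V
  have hbF := two_mul_sum_b1_fiber_add hf
  have hVG := card_V_eq_sum_card_fiber_V hact
  have hAG := card_A_eq_sum_card_fiber_A_add hG hH hf hact
  have hAH := card_A_eq_two_mul_ncard_compl_add hG hf hact
  have hVH : Fintype.card H.V = f.vertexImage.ncard + f.vertexImageᶜ.ncard := by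
    rw [Set.ncard_add_ncard_compl, Nat.card_eq_fintype_card]
  omega
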